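/- arXiv:1705.01965 — 4 statements merged into one kernel-verified Lean document; each statement's English description precedes it below -/
import Mathlib

section
/- Let machines have speeds s₁ ≤ s₂ with s₁ < s₂, let ℓ₁, ℓ₂ ≥ 0 be their current loads, let Λ > 0, and define the price π₂ = ℓ₁ - ℓ₂ + s₁·(1/s₁ - 1/s₂)·(2Λ - ℓ₁). Then for every job size p > 0, the inequality ℓ₁ + p/s₁ ≤ ℓ₂ + p/s₂ + π₂ holds if and only if ℓ₁ + p/s₁ ≤ 2Λ. -/
/-!
Substituting the price, the cost gap between the two machines is
`s₁ (1/s₁ - 1/s₂) (2Λ - (ℓ₁ + p/s₁))`, a positive multiple of the slack of machine 1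
against the bound `2Λ`; so the two inequalities have the same sign.
-/

lemma le_iff_le_of_sub_eq_mul_sub {a b B c : ℝ} (hc : 0 < c) (h : b - a = c * (B - a)) :
    a ≤ b ↔ a ≤ B := by
  rw [← sub_nonneg, h, mul_nonneg_iff_of_pos_left hc, sub_nonneg]

lemma price_cost_sub_cost {s₁ : ℝ} (hs₁ : s₁ ≠ 0) (s₂ ℓ₁ ℓ₂ B p : ℝ) :
    ℓ₂ + p / s₂ + (ℓ₁ - ℓ₂ + s₁ * (1 / s₁ - 1 / s₂) * (B - ℓ₁)) - (ℓ₁ + p / s₁)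
      = s₁ * (1 / s₁ - 1 / s₂) * (B - (ℓ₁ + p / s₁)) := by
  field_simp
  ring

lemma mul_one_div_sub_one_div_pos {s₁ s₂ : ℝ} (hs₁ : 0 < s₁) (hs : s₁ < s₂) :
    0 < s₁ * (1 / s₁ - 1 / s₂) :=
  mul_pos hs₁ (sub_pos.mpr (one_div_lt_one_div_of_lt hs₁ hs))

theorem two_machine_price_iff_general
    (s₁ s₂ ℓ₁ ℓ₂ Λ π₂ : ℝ)
    (hs₁ : 0 < s₁) (hs : s₁ < s₂)
    (hπ : π₂ = ℓ₁ - ℓ₂ + s₁ * (1 / s₁ - 1 / s₂) * (2 * Λ - ℓ₁)) :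
    ∀ p : ℝ, 0 < p →
      (ℓ₁ + p / s₁ ≤ ℓ₂ + p / s₂ + π₂ ↔ ℓ₁ + p / s₁ ≤ 2 * Λ) := by
  intro p _
  subst hπ
  exact le_iff_le_of_sub_eq_mul_sub (mul_one_div_sub_one_div_pos hs₁ hs)
    (price_cost_sub_cost hs₁.ne' s₂ ℓ₁ ℓ₂ (2 * Λ) p)

/-- Two related machines with speeds `s₁ < s₂`, loads `ℓ₁, ℓ₂ ≥ 0`, estimate `Λ > 0`,
and price `π₂ = ℓ₁ - ℓ₂ + s₁·(1/s₁ - 1/s₂)·(2Λ - ℓ₁)` on the fast machine.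
For every job size `p > 0`, the job weakly prefers machine 1 iff machine 1 is feasible. -/
theorem two_machine_price_iff
    (s₁ s₂ ℓ₁ ℓ₂ Λ π₂ : ℝ)
    (hs₁ : 0 < s₁) (hs : s₁ < s₂)
    (hℓ₁ : 0 ≤ ℓ₁) (hℓ₂ : 0 ≤ ℓ₂) (hΛ : 0 < Λ)
    (hπ : π₂ = ℓ₁ - ℓ₂ + s₁ * (1 / s₁ - 1 / s₂) * (2 * Λ - ℓ₁)) :
    ∀ p : ℝ, 0 < p →
      (ℓ₁ + p / s₁ ≤ ℓ₂ + p / s₂ + π₂ ↔ ℓ₁ + p / s₁ ≤ 2 * Λ) :=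
  two_machine_price_iff_general s₁ s₂ ℓ₁ ℓ₂ Λ π₂ hs₁ hs hπ
end

section
/- Let Λ > 0, ε > 0, p > 0, and s > 0 with p/s ≤ L* ≤ Λ for some L* > 0. If Λ' = max{2, 2^{⌈log₂(p/(s·Λ_prev))⌉}}·Λ_prev where Λ_prev < L*, then Λ' ≤ 2·L*. -/
open Real

/- Rounding the exponent up overshoots by a factor less than the base: `b ^ ⌈log_b y⌉ < b * y`.
Hence the update factor is at most `2 · max {1, p / (s Λ_prev)}`, and multiplying by `Λ_prev`
gives `2 · max {Λ_prev, p / s} ≤ 2 L*`. -/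

theorem zpow_ceil_logb_lt_mul {b y : ℝ} (hb : 1 < b) (hy : 0 < y) :
    b ^ ⌈logb b y⌉ < b * y := by
  rw [← rpow_intCast]
  calc b ^ (⌈logb b y⌉ : ℝ) < b ^ (logb b y + 1) :=
        rpow_lt_rpow_of_exponent_lt hb (Int.ceil_lt_add_one _)
    _ = b * y := by
      rw [rpow_add (by linarith), rpow_one, rpow_logb (by linarith) hb.ne' hy, mul_comm]

theorem max_zpow_ceil_logb_div_mul_le {b c q : ℝ} (hb : 1 < b) (hc : 0 < c) (hq : 0 < q) :
    max b (b ^ ⌈logb b (q / c)⌉) * c ≤ b * max c q := by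
  have hb0 : 0 ≤ b := by linarith
  have factor_le : max b (b ^ ⌈logb b (q / c)⌉) ≤ b * max 1 (q / c) :=
    max_le (le_mul_of_one_le_right hb0 (le_max_left _ _))
      ((zpow_ceil_logb_lt_mul hb (div_pos hq hc)).le.trans
        (mul_le_mul_of_nonneg_left (le_max_right _ _) hb0))
  calc max b (b ^ ⌈logb b (q / c)⌉) * c ≤ b * max 1 (q / c) * c :=
        mul_le_mul_of_nonneg_right factor_le hc.le
    _ = b * max c q := by
      rw [mul_assoc, max_mul_of_nonneg _ _ hc.le, one_mul, div_mul_cancel₀ _ hc.ne']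

theorem final_estimate_bound_general
    (p s Lstar Λprev Λ' : ℝ)
    (hp : 0 < p) (hs : 0 < s)
    (hps : p / s ≤ Lstar)
    (hprev_pos : 0 < Λprev) (hprev : Λprev < Lstar)
    (hΛ' : Λ' = max 2 ((2 : ℝ) ^ (⌈Real.logb 2 (p / (s * Λprev))⌉ : ℤ)) * Λprev) :
    Λ' ≤ 2 * Lstar := by
  rw [hΛ', ← div_div]
  calc _ ≤ 2 * max Λprev (p / s) :=
        max_zpow_ceil_logb_div_mul_le one_lt_two hprev_pos (div_pos hp hs)
    _ ≤ 2 * Lstar := by gcongr; exact max_le hprev.le hps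

/-- If `Λ_prev < L*`, `p/s ≤ L* ≤ Λ`, and
`Λ' = max{2, 2^{⌈log₂(p/(s·Λ_prev))⌉}}·Λ_prev`, then `Λ' ≤ 2·L*`. -/
theorem final_estimate_bound
    (Λ ε p s Lstar Λprev Λ' : ℝ)
    (hΛ : 0 < Λ) (hε : 0 < ε) (hp : 0 < p) (hs : 0 < s) (hL : 0 < Lstar)
    (hps : p / s ≤ Lstar) (hLΛ : Lstar ≤ Λ)
    (hprev_pos : 0 < Λprev) (hprev : Λprev < Lstar)
    (hΛ' : Λ' = max 2 ((2 : ℝ) ^ (⌈Real.logb 2 (p / (s * Λprev))⌉ : ℤ)) * Λprev) :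
    Λ' ≤ 2 * Lstar :=
  final_estimate_bound_general p s Lstar Λprev Λ' hp hs hps hprev_pos hprev hΛ'
end

section
/- Let s₁ < s₂ < ⋯ < s_k be strictly increasing positive speeds, with real loads ℓ₁,…,ℓ_k ≥ 0, virtual loads ℓ̂₁,…,ℓ̂_k ≥ 0, Λ > 0, ε > 0. Define prices recursively by π₁ = 0 and π_{b+1} = ℓ_b - ℓ_{b+1} + (1 - s_b/s_{b+1})·((2+ε)Λ - ℓ̂_b) + π_b. If a job of size p > 0 satisfies ℓ̂_b + p/s_b > (2+ε)Λ for every b < k (all slower machines are infeasible), then ℓ_k + p/s_k + π_k < ℓ_b + p/s_b + π_b for every b < k, i.e., the job strictly prefers the fastest machine. -/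
/-!
Moving a job from machine `b` to the faster machine `b + 1` saves `p / s_b - p / s_{b+1}
= (1 - s_b / s_{b+1}) · p / s_b` in processing time, while the price increment charges only
`(1 - s_b / s_{b+1}) · ((2+ε)Λ - ℓ̂_b)` on top of the load difference. Infeasibility of `b`
says exactly that `(2+ε)Λ - ℓ̂_b < p / s_b`, so each step to a faster machine strictly lowers
the cost, and the fastest machine is the strict minimizer.
-/

lemma cost_faster_lt_of_infeasible {s s' ℓ ℓ' ℓhat π θ p : ℝ} (hs : 0 < s) (hss' : s < s')
    (hinfeas : θ < ℓhat + p / s) :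
    ℓ' + p / s' + (ℓ - ℓ' + (1 - s / s') * (θ - ℓhat) + π) < ℓ + p / s + π := by
  have hs' : 0 < s' := hs.trans hss'
  have hfactor : 0 < 1 - s / s' := sub_pos.mpr ((div_lt_one hs').mpr hss')
  have hsaving : p / s - p / s' = (1 - s / s') * (p / s) := by field_simp
  have hcharge : (1 - s / s') * (θ - ℓhat) < (1 - s / s') * (p / s) :=
    mul_lt_mul_of_pos_left (by linarith) hfactor
  linarith

theorem fastest_machine_preferred_general
    (k : ℕ)
    (s ℓ ℓhat π : ℕ → ℝ)
    (hs_pos : ∀ b, b < k → 0 < s b)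
    (hs_mono : ∀ b, b + 1 < k → s b < s (b + 1))
    (Λ ε : ℝ)
    (hπ : ∀ b, b + 1 < k →
      π (b + 1) = ℓ b - ℓ (b + 1) + (1 - s b / s (b + 1)) * ((2 + ε) * Λ - ℓhat b) + π b)
    (p : ℝ)
    (hinfeas : ∀ b, b < k - 1 → (2 + ε) * Λ < ℓhat b + p / s b) :
    ∀ b, b < k - 1 →
      ℓ (k - 1) + p / s (k - 1) + π (k - 1) < ℓ b + p / s b + π b := by
  have hstep : ∀ b, b < k - 1 →
      ℓ (b + 1) + p / s (b + 1) + π (b + 1) < ℓ b + p / s b + π b := by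
    intro b hb
    rw [hπ b (by omega)]
    exact cost_faster_lt_of_infeasible (hs_pos b (by omega)) (hs_mono b (by omega)) (hinfeas b hb)
  have hanti : StrictAntiOn (fun b => ℓ b + p / s b + π b) (Set.Iic (k - 1)) :=
    strictAntiOn_Iic_of_succ_lt hstep
  intro b hb
  exact hanti (Set.mem_Iic.mpr hb.le) Set.self_mem_Iic hb

/-- If all slower machines are infeasible at threshold `(2+ε)Λ`, then under the
recursively-defined prices the job strictly prefers the fastest machine. -/
theorem fastest_machine_preferred
    (k : ℕ) (hk : 0 < k)
    (s ℓ ℓhat π : ℕ → ℝ)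
    (hs_pos : ∀ b, b < k → 0 < s b)
    (hs_mono : ∀ b, b + 1 < k → s b < s (b + 1))
    (hℓ : ∀ b, b < k → 0 ≤ ℓ b) (hℓhat : ∀ b, b < k → 0 ≤ ℓhat b)
    (Λ ε : ℝ) (hΛ : 0 < Λ) (hε : 0 < ε)
    (hπ0 : π 0 = 0)
    (hπ : ∀ b, b + 1 < k →
      π (b + 1) = ℓ b - ℓ (b + 1) + (1 - s b / s (b + 1)) * ((2 + ε) * Λ - ℓhat b) + π b)
    (p : ℝ) (hp : 0 < p)
    (hinfeas : ∀ b, b < k - 1 → (2 + ε) * Λ < ℓhat b + p / s b) :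
    ∀ b, b < k - 1 →
      ℓ (k - 1) + p / s (k - 1) + π (k - 1) < ℓ b + p / s b + π b :=
  fastest_machine_preferred_general k s ℓ ℓhat π hs_pos hs_mono Λ ε hπ p hinfeas
end

section
/- In the identical machines model with prices sorted as π_{i₁} ≤ π_{i₂} ≤ ⋯ ≤ π_{i_m} and π_max = π_{i_m}, the sequence of jobs p_j = π_max − π_{i_j} for j = 1,…,m (introduced in order), with agent j choosing a machine minimizing current load plus processing time plus price, results in job j choosing machine i_j for each j; afterwards every machine i satisfies ℓ_i + π_i = π_max. -/
/-! A job arriving at machine `j` finds it empty, so its cost there, net of its own size, is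
`π j`. Every earlier machine `i < j` already carries `p i = π_max − π i`, so its load plus
price is exactly `π_max ≥ π j`; every later machine is still empty and has price `π i ≥ π j`. -/

lemma price_le_flattened_load_add_price {ι α : Type*} [LinearOrder ι] [AddGroup α] [Preorder α]
    {π : ι → α} (hπ : Monotone π) {πmax : α}
    (hmax : ∀ i, π i ≤ πmax) (j i : ι) :
    π j ≤ (if i < j then πmax - π i else 0) + π i := by
  split_ifs with hij
  · rw [sub_add_cancel]
    exact hmax j
  · rw [zero_add]
    exact hπ (not_lt.1 hij)

lemma Fin.monotone_apply_le_pred {α : Type*} [Preorder α] {m : ℕ} {f : Fin m → α}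
    (hf : Monotone f) (h : m - 1 < m) (i : Fin m) : f i ≤ f ⟨m - 1, h⟩ :=
  hf (Fin.le_def.2 (by simp only; omega))

/-- Flattening construction for identical machines: with prices sorted increasingly and
jobs `p_j = π_max − π_j` arriving in order, job `j` (weakly) minimizes its cost on
machine `j`, and afterwards every machine `i` satisfies `ℓ_i + π_i = π_max`. -/
theorem identical_flattening
    (m : ℕ) (hm : 0 < m) (π : Fin m → ℝ) (hmono : Monotone π)
    (πmax : ℝ) (hπmax : πmax = π ⟨m - 1, by omega⟩)
    (p : Fin m → ℝ) (hp : ∀ j, p j = πmax - π j)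
    (ℓ : Fin m → Fin m → ℝ)  -- ℓ j i = load of machine i just before job j arrives
    (hℓ : ∀ j i : Fin m, ℓ j i = if i < j then p i else 0) :
    (∀ j i : Fin m, ℓ j j + p j + π j ≤ ℓ j i + p j + π i) ∧
    (∀ i : Fin m, p i + π i = πmax) := by
  have hmax : ∀ i, π i ≤ πmax := hπmax ▸ Fin.monotone_apply_le_pred hmono _
  refine ⟨fun j i => ?_, fun i => by rw [hp, sub_add_cancel]⟩
  have hjj : ℓ j j = 0 := by rw [hℓ, if_neg (lt_irrefl j)]
  have hcost := price_le_flattened_load_add_price hmono hmax j i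
  rw [hjj, hℓ j i, hp i]
  linarith
end
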